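/- arXiv:1310.7692 — 4 statements merged into one kernel-verified Lean document; each statement's English description precedes it below -/
import Mathlib

section
/- Let n ≥ 2 and let f(x,y) = f₀xⁿ + ⋯ + f_nyⁿ be a binary form of degree n over ℂ with f₀ ≠ 0 and f(x,1) separable of degree n. Then the set of pairs (A,B) of n×n complex symmetric matrices with (−1)^{n(n−1)/2}·det(xA − yB) = f(x,y) is nonempty, and SL_n(ℂ) acts transitively on this set via g·(A,B) = (gAgᵀ, gBgᵀ). -/
open Polynomial Matrix

noncomputable def binForm {n : ℕ} {R : Type*} [CommRing R] (f : Fin (n+1) → R) :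
    MvPolynomial (Fin 2) R :=
  ∑ i : Fin (n+1), MvPolynomial.C (f i) * MvPolynomial.X 0 ^ (n - (i:ℕ)) * MvPolynomial.X 1 ^ (i:ℕ)

noncomputable def pencilDisc {m : Type*} [Fintype m] [DecidableEq m] {R : Type*} [CommRing R]
    (A B : Matrix m m R) : MvPolynomial (Fin 2) R :=
  (-1) ^ (Fintype.card m * (Fintype.card m - 1) / 2) *
    Matrix.det (Matrix.of fun i j =>
      MvPolynomial.X (0 : Fin 2) * MvPolynomial.C (A i j) - MvPolynomial.X (1 : Fin 2) * MvPolynomial.C (B i j))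

noncomputable def fxOne {n : ℕ} {R : Type*} [CommRing R] (f : Fin (n+1) → R) : R[X] :=
  ∑ i : Fin (n+1), C (f i) * X ^ (n - (i:ℕ))

noncomputable abbrev Lf {n : ℕ} {K : Type*} [Field K] (f : Fin (n+1) → K) :=
  AdjoinRoot (C (f 0)⁻¹ * fxOne f)

/-!
Evaluating `pencilDisc A B = binForm f` at `(1, 0)` gives `± det A = f₀ ≠ 0`, and dehomogenizing
it gives `fxOne f = f₀ · charpoly (A⁻¹ B)`, so `A⁻¹ B` has the `n` distinct roots `ρ i` of
`fxOne f` as eigenvalues. For an eigenbasis `P`, both `Pᵀ A P` and `Pᵀ B P = Pᵀ A P · diag ρ` are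
symmetric, which forces `Pᵀ A P` to be diagonal; square roots of its entries then give
`A = g gᵀ` and `B = g (diag ρ) gᵀ`. Two such normal forms `g`, `g'` have `det g = ± det g'`
because `det A = det A'`, and flipping the sign of one column of `g` does not change the normal
form, so `γ = g' g⁻¹` can be taken in `SL_n`. Conversely the diagonal pair
`(diag d, diag d · diag ρ)` with `± ∏ d = f₀` has invariant form `f`.
-/

section BinaryForm

variable {R : Type*} [CommRing R] {n : ℕ}

lemma isHomogeneous_binForm (f : Fin (n+1) → R) : (binForm f).IsHomogeneous n := by
  refine MvPolynomial.IsHomogeneous.sum _ _ _ fun i _ => ?_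
  simpa [Nat.sub_add_cancel (Fin.is_le i)] using
    (MvPolynomial.isHomogeneous_C_mul_X_pow (f i) 0 (n - i)).mul
      (MvPolynomial.isHomogeneous_X_pow (R := R) 1 (i : ℕ))

lemma aeval_X_one_binForm (f : Fin (n+1) → R) :
    MvPolynomial.aeval ![(X : R[X]), 1] (binForm f) = fxOne f := by
  simp [binForm, fxOne, Polynomial.algebraMap_eq]

lemma eval_one_zero_binForm (f : Fin (n+1) → R) :
    MvPolynomial.eval ![1, 0] (binForm f) = f 0 := by
  rw [binForm, map_sum, Finset.sum_eq_single 0]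
  · simp
  · intro i _ hi
    simp [zero_pow (Fin.val_ne_zero_iff.mpr hi)]
  · simp

lemma coeff_fxOne_self (f : Fin (n+1) → R) : (fxOne f).coeff n = f 0 := by
  rw [fxOne, finsetSum_coeff, Finset.sum_eq_single 0]
  · simp
  · intro i _ hi
    rw [coeff_C_mul_X_pow, if_neg]
    have := Fin.val_ne_zero_iff.mpr hi
    omega
  · simp

lemma eq_binForm_of_isHomogeneous {q : MvPolynomial (Fin 2) R} (hq : q.IsHomogeneous n)
    {f : Fin (n+1) → R} (hqf : MvPolynomial.aeval ![(X : R[X]), 1] q = fxOne f) :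
    q = binForm f := by
  rw [← homogenize_eq_of_isHomogeneous hq hqf,
    homogenize_eq_of_isHomogeneous (isHomogeneous_binForm f) (aeval_X_one_binForm f)]

end BinaryForm

section Pencil

variable {R : Type*} [CommRing R] {m : Type*} [Fintype m] [DecidableEq m]

lemma MvPolynomial.isHomogeneous_det {σ : Type*} {M : Matrix m m (MvPolynomial σ R)}
    (hM : ∀ i j, (M i j).IsHomogeneous 1) : M.det.IsHomogeneous (Fintype.card m) := by
  rw [det_apply]
  refine IsHomogeneous.sum _ _ _ fun τ _ => (mem_homogeneousSubmodule _ _).mp (zsmul_mem ?_ _)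
  simpa using IsHomogeneous.prod Finset.univ (fun i => M (τ i) i) (fun _ => 1)
    fun i _ => hM (τ i) i

lemma isHomogeneous_pencilDisc (A B : Matrix m m R) :
    (pencilDisc A B).IsHomogeneous (Fintype.card m) := by
  have hsign : ((-1 : MvPolynomial (Fin 2) R) ^
      (Fintype.card m * (Fintype.card m - 1) / 2)).IsHomogeneous 0 := by
    simpa using ((MvPolynomial.isHomogeneous_one (Fin 2) R).neg).pow _
  have h := hsign.mul (MvPolynomial.isHomogeneous_det (M := of fun i j =>
    MvPolynomial.X 0 * MvPolynomial.C (A i j) - MvPolynomial.X 1 * MvPolynomial.C (B i j))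
      fun i j => by
        simpa using
          ((MvPolynomial.isHomogeneous_X R 0).mul (MvPolynomial.isHomogeneous_C _ (A i j))).sub
            ((MvPolynomial.isHomogeneous_X R 1).mul (MvPolynomial.isHomogeneous_C _ (B i j))))
  rwa [zero_add] at h

lemma eval_one_zero_pencilDisc (A B : Matrix m m R) :
    MvPolynomial.eval ![1, 0] (pencilDisc A B)
      = (-1) ^ (Fintype.card m * (Fintype.card m - 1) / 2) * A.det := by
  rw [pencilDisc, map_mul, map_pow, map_neg, map_one, RingHom.map_det]
  congr 2
  ext i j
  simp

lemma map_C_mul_charmatrix (A M : Matrix m m R) :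
    A.map C * charmatrix M = Matrix.of fun i j => X * C (A i j) - C ((A * M) i j) := by
  rw [charmatrix, mul_sub, RingHom.mapMatrix_apply, ← Matrix.map_mul (f := C) (L := A) (M := M)]
  ext i j : 1
  simp only [Matrix.sub_apply, of_apply, map_apply, scalar_apply, mul_diagonal, mul_comm]

lemma aeval_X_one_pencilDisc {A : Matrix m m R} (hA : IsUnit A.det) (B : Matrix m m R) :
    MvPolynomial.aeval ![(X : R[X]), 1] (pencilDisc A B)
      = C ((-1) ^ (Fintype.card m * (Fintype.card m - 1) / 2) * A.det) * (A⁻¹ * B).charpoly := by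
  rw [pencilDisc, map_mul, map_pow, map_neg, map_one, AlgHom.map_det, C_mul, map_pow, map_neg,
    map_one, mul_assoc, charpoly, RingHom.map_det C A, ← det_mul, RingHom.mapMatrix_apply,
    map_C_mul_charmatrix, mul_nonsing_inv_cancel_left _ _ hA]
  congr 2
  ext i j
  simp [Polynomial.algebraMap_eq]

end Pencil

section PencilBinForm

variable {R : Type*} [CommRing R] {n : ℕ} {A B : Matrix (Fin n) (Fin n) R} {f : Fin (n+1) → R}

lemma neg_one_pow_mul_det_eq_of_pencilDisc_eq_binForm (h : pencilDisc A B = binForm f) :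
    (-1) ^ (n * (n - 1) / 2) * A.det = f 0 := by
  simpa [eval_one_zero_pencilDisc, eval_one_zero_binForm] using
    congrArg (MvPolynomial.eval ![1, 0]) h

lemma pencilDisc_eq_binForm_iff (hA : IsUnit A.det) :
    pencilDisc A B = binForm f ↔
      C ((-1) ^ (n * (n - 1) / 2) * A.det) * (A⁻¹ * B).charpoly = fxOne f := by
  have hdehom := aeval_X_one_pencilDisc hA B
  rw [Fintype.card_fin] at hdehom
  refine ⟨fun h => ?_, fun h => ?_⟩
  · rw [← hdehom, h, aeval_X_one_binForm]
  · exact eq_binForm_of_isHomogeneous (by simpa using isHomogeneous_pencilDisc A B)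
      (hdehom.trans h)

end PencilBinForm

lemma Matrix.IsSymm.transpose_mul_mul {R : Type*} [CommSemiring R] {m : Type*} [Fintype m]
    {A : Matrix m m R} (hA : A.IsSymm) (P : Matrix m m R) : (Pᵀ * A * P).IsSymm := by
  simp [IsSymm, transpose_mul, hA.eq, Matrix.mul_assoc]

lemma Matrix.IsSymm.isDiag_of_isSymm_mul_diagonal {R : Type*} [CommRing R] [NoZeroDivisors R]
    {m : Type*} [Fintype m] [DecidableEq m] {S : Matrix m m R} (hS : S.IsSymm) {ρ : m → R}
    (hρ : Function.Injective ρ) (hSρ : (S * diagonal ρ).IsSymm) : S.IsDiag := by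
  intro i j hij
  have h := hSρ.apply j i
  rw [mul_diagonal, mul_diagonal, hS.apply i j] at h
  have : S i j * (ρ i - ρ j) = 0 := by linear_combination -h
  exact (mul_eq_zero.mp this).resolve_right (sub_ne_zero.mpr (hρ.ne hij))

lemma Matrix.exists_det_eq_neg_one_diagonal_conj {R : Type*} [CommRing R] {m : Type*}
    [Fintype m] [DecidableEq m] [Nonempty m] :
    ∃ E : Matrix m m R, E.det = -1 ∧
      ∀ ρ : m → R, E * diagonal ρ * Eᵀ = diagonal ρ := by
  obtain ⟨i₀⟩ := ‹Nonempty m›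
  refine ⟨diagonal (Function.update 1 i₀ (-1)), ?_, fun ρ => ?_⟩
  · simp [Finset.prod_update_of_mem]
  · rw [diagonal_transpose, diagonal_mul_diagonal, diagonal_mul_diagonal]
    congr 1
    funext i
    by_cases h : i = i₀ <;> simp [h]

section Congruence

variable {K : Type*} [Field K] {m : Type*} [Fintype m] [DecidableEq m]

lemma Matrix.exists_isUnit_det_mul_eq_mul_diagonal {M : Matrix m m K} {ρ : m → K}
    (hρ : Function.Injective ρ) (hM : M.charpoly = ∏ i, (X - C (ρ i))) :
    ∃ P : Matrix m m K, IsUnit P.det ∧ M * P = P * diagonal ρ := by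
  have hev (i : m) : Module.End.HasEigenvalue M.toLin' (ρ i) := by
    rw [Module.End.hasEigenvalue_iff_isRoot_charpoly, charpoly_toLin', hM, IsRoot, eval_prod]
    exact Finset.prod_eq_zero (Finset.mem_univ i) (by simp)
  choose v hv using fun i => (hev i).exists_hasEigenvector
  refine ⟨Matrix.of fun i j => v j i, ?_, ?_⟩
  · rw [← isUnit_iff_isUnit_det, ← linearIndependent_cols_iff_isUnit]
    exact Module.End.eigenvectors_linearIndependent' _ ρ hρ v hv
  · ext i j
    rw [mul_diagonal]
    simpa [mul_comm, mul_apply, mulVec, dotProduct] using congrFun (hv j).apply_eq_smul i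

lemma Matrix.eq_transpose_inv_mul_mul_inv {P : Matrix m m K} (hP : IsUnit P.det)
    (X : Matrix m m K) :
    X = (P⁻¹)ᵀ * (Pᵀ * X * P) * P⁻¹ := by
  calc X = (Pᵀ)⁻¹ * Pᵀ * X * (P * P⁻¹) := by
        rw [nonsing_inv_mul _ (by rwa [det_transpose]), mul_nonsing_inv _ hP, one_mul, mul_one]
    _ = _ := by rw [transpose_nonsing_inv]; simp only [Matrix.mul_assoc]

theorem Matrix.exists_eq_mul_transpose_of_charpoly_eq_prod [IsAlgClosed K] {A B : Matrix m m K}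
    (hA : A.IsSymm) (hB : B.IsSymm) (hdet : IsUnit A.det) {ρ : m → K}
    (hρ : Function.Injective ρ)
    (hchar : (A⁻¹ * B).charpoly = ∏ i, (X - C (ρ i))) :
    ∃ g : Matrix m m K, A = g * gᵀ ∧ B = g * diagonal ρ * gᵀ := by
  obtain ⟨P, hP, hMP⟩ := exists_isUnit_det_mul_eq_mul_diagonal hρ hchar
  have hBP : Pᵀ * B * P = Pᵀ * A * P * diagonal ρ := by
    rw [Matrix.mul_assoc, Matrix.mul_assoc, Matrix.mul_assoc, ← hMP, ← Matrix.mul_assoc A,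
      mul_nonsing_inv_cancel_left _ _ hdet]
  have hdiag : (Pᵀ * A * P).IsDiag :=
    (hA.transpose_mul_mul P).isDiag_of_isSymm_mul_diagonal hρ (hBP ▸ hB.transpose_mul_mul P)
  choose s hs using fun i => IsAlgClosed.exists_eq_mul_self ((Pᵀ * A * P) i i)
  have hs : Pᵀ * A * P = diagonal s * diagonal s := by
    rw [diagonal_mul_diagonal, ← hdiag.diagonal_diag]
    exact congrArg diagonal (funext hs)
  have hcomm : diagonal s * diagonal ρ = diagonal ρ * diagonal s := by
    simp [diagonal_mul_diagonal, mul_comm]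
  refine ⟨(P⁻¹)ᵀ * diagonal s, ?_, ?_⟩
  · rw [eq_transpose_inv_mul_mul_inv hP A, hs, transpose_mul, diagonal_transpose,
      transpose_transpose]
    simp only [Matrix.mul_assoc]
  · rw [eq_transpose_inv_mul_mul_inv hP B, hBP, hs, Matrix.mul_assoc (diagonal s), hcomm,
      transpose_mul, diagonal_transpose, transpose_transpose]
    simp only [Matrix.mul_assoc]

lemma Matrix.exists_specialLinearGroup_diagonal_conj [Nonempty m] {g g' : Matrix m m K}
    (hg : IsUnit g.det) (hdet : g.det ^ 2 = g'.det ^ 2) :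
    ∃ γ : SpecialLinearGroup m K, ∀ ρ : m → K,
      g' * diagonal ρ * g'ᵀ = γ * (g * diagonal ρ * gᵀ) * (γ : Matrix m m K)ᵀ := by
  obtain ⟨h, hh, hconj⟩ : ∃ h : Matrix m m K, h.det = g'.det ∧
      ∀ ρ : m → K, h * diagonal ρ * hᵀ = g * diagonal ρ * gᵀ := by
    rcases sq_eq_sq_iff_eq_or_eq_neg.mp hdet with h | h
    · exact ⟨g, h, fun _ => rfl⟩
    · obtain ⟨E, hE, hEρ⟩ := exists_det_eq_neg_one_diagonal_conj (R := K) (m := m)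
      refine ⟨g * E, by rw [det_mul, hE, h]; ring, fun ρ => ?_⟩
      simpa only [transpose_mul, Matrix.mul_assoc] using congrArg (g * · * gᵀ) (hEρ ρ)
  have hhu : IsUnit h.det := by rw [hh, ← isUnit_pow_iff two_ne_zero, ← hdet]; exact hg.pow 2
  refine ⟨⟨g' * h⁻¹, ?_⟩, fun ρ => ?_⟩
  · rw [det_mul, det_nonsing_inv, hh]
    exact Ring.mul_inverse_cancel _ (hh ▸ hhu)
  change _ = g' * h⁻¹ * _ * (g' * h⁻¹)ᵀ
  rw [← hconj ρ]
  conv_lhs => rw [← nonsing_inv_mul_cancel_right (A := h) g' hhu]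
  simp only [transpose_mul, Matrix.mul_assoc]

end Congruence

theorem Polynomial.Separable.exists_injective_eq_C_leadingCoeff_mul_prod {K : Type*} [Field K]
    [IsAlgClosed K] {m : Type*} [Fintype m] {p : K[X]} (hsep : p.Separable)
    (hdeg : p.natDegree = Fintype.card m) :
    ∃ ρ : m → K, Function.Injective ρ ∧ p = C p.leadingCoeff * ∏ i, (X - C (ρ i)) := by
  classical
  have hnodup : p.roots.Nodup := nodup_roots hsep
  have hcard : p.roots.card = p.natDegree := IsAlgClosed.card_roots_eq_natDegree
  let e : m ≃ p.roots.toFinset := Fintype.equivOfCardEq <| by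
    rw [Fintype.card_coe, Multiset.toFinset_card_of_nodup hnodup, hcard, hdeg]
  refine ⟨fun i => e i, Subtype.val_injective.comp e.injective, ?_⟩
  conv_lhs => rw [← C_leadingCoeff_mul_prod_multiset_X_sub_C hcard]
  rw [Fintype.prod_equiv e _ (fun a : p.roots.toFinset => X - C (a : K)) fun _ => rfl,
    Finset.prod_coe_sort p.roots.toFinset (fun a => X - C a), Finset.prod_eq_multiset_prod,
    Multiset.toFinset_val, hnodup.dedup]

section SplitBinForm

variable {K : Type*} [Field K] {n : ℕ} {f : Fin (n+1) → K} {ρ : Fin n → K}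

lemma isUnit_det_and_charpoly_eq_of_pencilDisc_eq_binForm (hf0 : f 0 ≠ 0)
    (hf : fxOne f = C (f 0) * ∏ i, (X - C (ρ i))) {A B : Matrix (Fin n) (Fin n) K}
    (h : pencilDisc A B = binForm f) :
    IsUnit A.det ∧ (A⁻¹ * B).charpoly = ∏ i, (X - C (ρ i)) := by
  have hdet := neg_one_pow_mul_det_eq_of_pencilDisc_eq_binForm h
  have hA : IsUnit A.det := isUnit_iff_ne_zero.mpr (right_ne_zero_of_mul (hdet ▸ hf0))
  refine ⟨hA, mul_left_cancel₀ (C_ne_zero.mpr hf0) ?_⟩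
  rw [← hf, ← hdet]
  exact (pencilDisc_eq_binForm_iff hA).mp h

lemma pencilDisc_diagonal_eq_binForm (hf0 : f 0 ≠ 0)
    (hf : fxOne f = C (f 0) * ∏ i, (X - C (ρ i))) {d : Fin n → K}
    (hd : (-1) ^ (n * (n - 1) / 2) * ∏ i, d i = f 0) :
    pencilDisc (diagonal d) (diagonal d * diagonal ρ) = binForm f := by
  have hA : IsUnit (diagonal d).det := by
    rw [det_diagonal]
    exact isUnit_iff_ne_zero.mpr (right_ne_zero_of_mul (hd ▸ hf0))
  rw [pencilDisc_eq_binForm_iff hA, nonsing_inv_mul_cancel_left _ _ hA, charpoly_diagonal,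
    det_diagonal, hd, hf]

end SplitBinForm

theorem stmt5 (n : ℕ) (hn : 2 ≤ n) (f : Fin (n+1) → ℂ) (hf0 : f 0 ≠ 0)
    (hsep : (fxOne f).Separable) (hdeg : (fxOne f).natDegree = n) :
    (∃ A B : Matrix (Fin n) (Fin n) ℂ, A.IsSymm ∧ B.IsSymm ∧ pencilDisc A B = binForm f) ∧
    (∀ A B A' B' : Matrix (Fin n) (Fin n) ℂ,
      A.IsSymm → B.IsSymm → pencilDisc A B = binForm f →
      A'.IsSymm → B'.IsSymm → pencilDisc A' B' = binForm f →
      ∃ γ : Matrix.SpecialLinearGroup (Fin n) ℂ,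
        A' = (γ : Matrix (Fin n) (Fin n) ℂ) * A * (γ : Matrix (Fin n) (Fin n) ℂ)ᵀ ∧
        B' = (γ : Matrix (Fin n) (Fin n) ℂ) * B * (γ : Matrix (Fin n) (Fin n) ℂ)ᵀ) := by
  obtain ⟨ρ, hρ, hf⟩ := hsep.exists_injective_eq_C_leadingCoeff_mul_prod (m := Fin n)
    (by rw [hdeg, Fintype.card_fin])
  rw [leadingCoeff, hdeg, coeff_fxOne_self] at hf
  let i₀ : Fin n := ⟨0, by omega⟩
  refine ⟨⟨_, _, isSymm_diagonal _, by simp [diagonal_mul_diagonal],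
    pencilDisc_diagonal_eq_binForm hf0 hf
      (d := Function.update 1 i₀ ((-1) ^ (n * (n - 1) / 2) * f 0)) (by simp [Finset.prod_update_of_mem, ← mul_assoc, ← mul_pow])⟩, ?_⟩
  intro A B A' B' hA hB hAB hA' hB' hAB'
  obtain ⟨hAu, hchar⟩ := isUnit_det_and_charpoly_eq_of_pencilDisc_eq_binForm hf0 hf hAB
  obtain ⟨hA'u, hchar'⟩ := isUnit_det_and_charpoly_eq_of_pencilDisc_eq_binForm hf0 hf hAB'
  have hdet : A.det = A'.det := mul_left_cancel₀ (pow_ne_zero _ (neg_ne_zero.mpr one_ne_zero))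
    ((neg_one_pow_mul_det_eq_of_pencilDisc_eq_binForm hAB).trans
      (neg_one_pow_mul_det_eq_of_pencilDisc_eq_binForm hAB').symm)
  obtain ⟨g, rfl, rfl⟩ := exists_eq_mul_transpose_of_charpoly_eq_prod hA hB hAu hρ hchar
  obtain ⟨g', rfl, rfl⟩ := exists_eq_mul_transpose_of_charpoly_eq_prod hA' hB' hA'u hρ hchar'
  have : Nonempty (Fin n) := ⟨i₀⟩
  obtain ⟨γ, hγ⟩ := exists_specialLinearGroup_diagonal_conj (g := g) (g' := g')
    (isUnit_of_mul_isUnit_left (det_mul g gᵀ ▸ hAu)) (by simpa [det_mul, sq] using hdet)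
  exact ⟨γ, by simpa using hγ 1, hγ ρ⟩
end

section
/- Let n be even and let f(x,y) = f₀xⁿ + ⋯ + f_nyⁿ be a binary form of degree n over ℝ such that f(x,1) is separable of degree n and f(x,y) < 0 for all (x,y) ∈ ℝ² with (x,y) ≠ (0,0) (f is negative definite). Then there is no pair (A,B) of n×n real symmetric matrices with (−1)^{n(n−1)/2}·det(xA − yB) = f(x,y). -/
open Polynomial Matrix

/-- Evaluation of the binary form with coefficient vector `f` at `(x, y)`. -/
def evalBinForm {n : ℕ} {R : Type*} [CommRing R] (f : Fin (n+1) → R) (x y : R) : R :=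
  ∑ i : Fin (n+1), f i * x ^ (n - (i:ℕ)) * y ^ (i:ℕ)

namespace Stmt6Aux

open Module

variable {n : ℕ}

/-- The quadratic form attached to a matrix. -/
def qf (M : Matrix (Fin n) (Fin n) ℝ) (u : Fin n → ℝ) : ℝ := u ⬝ᵥ (M *ᵥ u)

lemma qf_smul (M : Matrix (Fin n) (Fin n) ℝ) (c : ℝ) (u : Fin n → ℝ) :
    qf M (c • u) = c ^ 2 * qf M u := by
  simp only [qf, Matrix.mulVec_smul, dotProduct_smul, smul_dotProduct,
    smul_eq_mul]
  ring

lemma continuous_qf :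
    Continuous (fun p : Matrix (Fin n) (Fin n) ℝ × (Fin n → ℝ) => qf p.1 p.2) := by
  have : (fun p : Matrix (Fin n) (Fin n) ℝ × (Fin n → ℝ) => qf p.1 p.2)
      = fun p => ∑ i, p.2 i * ∑ j, p.1 i j * p.2 j := by
    funext p
    simp [qf, dotProduct, Matrix.mulVec]
  rw [this]
  refine continuous_finset_sum _ fun i _ => Continuous.mul ?_ ?_
  · exact (continuous_apply i).comp continuous_snd
  · refine continuous_finset_sum _ fun j _ => Continuous.mul ?_ ?_
    · exact ((continuous_apply j).comp ((continuous_apply i).comp continuous_fst))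
    · exact (continuous_apply j).comp continuous_snd

/-- The set of dimensions of negative-definite subspaces. -/
def negSet (M : Matrix (Fin n) (Fin n) ℝ) : Set ℕ :=
  {k | ∃ W : Submodule ℝ (Fin n → ℝ), finrank ℝ W = k ∧ ∀ u ∈ W, u ≠ 0 → qf M u < 0}

/-- The negative index (number of negative squares) of a matrix. -/
noncomputable def negIdx (M : Matrix (Fin n) (Fin n) ℝ) : ℕ := sSup (negSet M)

lemma negSet_nonempty (M : Matrix (Fin n) (Fin n) ℝ) : (negSet M).Nonempty := by
  refine ⟨0, ⊥, finrank_bot ℝ _, ?_⟩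
  intro u hu hne
  exact absurd ((Submodule.mem_bot ℝ).mp hu) hne

lemma negSet_bddAbove (M : Matrix (Fin n) (Fin n) ℝ) : BddAbove (negSet M) := by
  refine ⟨n, ?_⟩
  rintro k ⟨W, hW, -⟩
  have := Submodule.finrank_le W
  simpa [hW, Module.finrank_pi] using this

lemma negIdx_mem (M : Matrix (Fin n) (Fin n) ℝ) : negIdx M ∈ negSet M :=
  Nat.sSup_mem (negSet_nonempty M) (negSet_bddAbove M)

lemma le_negIdx {M : Matrix (Fin n) (Fin n) ℝ} {k : ℕ} (h : k ∈ negSet M) : k ≤ negIdx M :=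
  le_csSup (negSet_bddAbove M) h

section Core

variable {U M : Matrix (Fin n) (Fin n) ℝ} {lam : Fin n → ℝ}

/-- Span of the columns of `U` selected by a predicate. -/
def colSpan (U : Matrix (Fin n) (Fin n) ℝ) (P : Fin n → Prop) : Submodule ℝ (Fin n → ℝ) :=
  Submodule.span ℝ (Set.range fun i : {i // P i} => U *ᵥ Pi.single (i : Fin n) 1)

lemma star_mulVec_mulVec (hU' : star U * U = 1) (v : Fin n → ℝ) :
    star U *ᵥ (U *ᵥ v) = v := by
  rw [Matrix.mulVec_mulVec, hU', Matrix.one_mulVec]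

lemma mulVec_star_mulVec (hU : U * star U = 1) (v : Fin n → ℝ) :
    U *ᵥ (star U *ᵥ v) = v := by
  rw [Matrix.mulVec_mulVec, hU, Matrix.one_mulVec]

lemma finrank_colSpan (hU' : star U * U = 1) (P : Fin n → Prop) [DecidablePred P] :
    finrank ℝ (colSpan U P) = Fintype.card {i // P i} := by
  apply finrank_span_eq_card
  have hfull : LinearIndependent ℝ (fun i : Fin n => U *ᵥ Pi.single i 1) := by
    rw [Fintype.linearIndependent_iff]
    intro g hg i
    have h1 : ∑ i, g i • (U *ᵥ Pi.single i 1) = U *ᵥ g := by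
      funext j
      simp [Matrix.mulVec_single, Matrix.mulVec, dotProduct, Finset.sum_apply, mul_comm]
    have h2 : U *ᵥ g = 0 := by rw [← h1, hg]
    have h3 := congrArg (fun v => star U *ᵥ v) h2
    have hg0 : g = 0 := by simpa [star_mulVec_mulVec hU'] using h3
    exact congrFun hg0 i
  exact hfull.comp Subtype.val Subtype.val_injective

lemma coords_colSpan (hU' : star U * U = 1) (P : Fin n → Prop)
    {u : Fin n → ℝ} (hu : u ∈ colSpan U P) : ∀ i, ¬ P i → (star U *ᵥ u) i = 0 := by
  classical
  let T : Submodule ℝ (Fin n → ℝ) :=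
    ⨅ (i : Fin n) (_ : ¬ P i), LinearMap.ker ((LinearMap.proj i).comp (Matrix.mulVecLin (star U)))
  have hmem : ∀ v : Fin n → ℝ, v ∈ T ↔ ∀ i, ¬ P i → (star U *ᵥ v) i = 0 := by
    intro v
    simp [T, Submodule.mem_iInf, LinearMap.mem_ker, Matrix.mulVecLin]
  have hsub : colSpan U P ≤ T := by
    apply Submodule.span_le.mpr
    rintro x ⟨i, rfl⟩
    rw [SetLike.mem_coe, hmem]
    intro j hj
    rw [star_mulVec_mulVec hU']
    have : (i : Fin n) ≠ j := fun h => hj (h ▸ i.2)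
    simp [Pi.single_apply, this.symm]
  exact (hmem u).mp (hsub hu)

lemma qf_eq_sum (hM : M = U * Matrix.diagonal lam * star U) (u : Fin n → ℝ) :
    qf M u = ∑ i, lam i * ((star U *ᵥ u) i) ^ 2 := by
  have hstar : star U = Uᵀ := by
    rw [Matrix.star_eq_conjTranspose]
    ext i j
    simp [Matrix.conjTranspose_apply]
  have hvm : u ᵥ* U = star U *ᵥ u := by
    rw [hstar, ← Matrix.mulVec_transpose]
  rw [qf, hM]
  rw [← Matrix.mulVec_mulVec, ← Matrix.mulVec_mulVec, Matrix.dotProduct_mulVec, hvm]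
  rw [dotProduct, Finset.sum_congr rfl]
  intro i _
  simp [Matrix.mulVec_diagonal]
  ring

lemma qf_neg_on_colSpan (hU : U * star U = 1) (hU' : star U * U = 1)
    (hM : M = U * Matrix.diagonal lam * star U)
    (P : Fin n → Prop) (hP : ∀ i, P i → lam i < 0) :
    ∀ u ∈ colSpan U P, u ≠ 0 → qf M u < 0 := by
  intro u hu hne
  have hcoords := coords_colSpan hU' P hu
  have hterm : ∀ i : Fin n, lam i * ((star U *ᵥ u) i) ^ 2 ≤ 0 := by
    intro i
    by_cases hPi : P i
    · exact mul_nonpos_of_nonpos_of_nonneg (le_of_lt (hP i hPi)) (sq_nonneg _)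
    · rw [hcoords i hPi]; simp
  have hsum : qf M u ≤ 0 := by
    rw [qf_eq_sum hM]
    exact Finset.sum_nonpos fun i _ => hterm i
  rcases lt_or_eq_of_le hsum with h | h
  · exact h
  · exfalso
    have hall : ∀ i ∈ Finset.univ, lam i * ((star U *ᵥ u) i) ^ 2 = 0 := by
      rw [← Finset.sum_eq_zero_iff_of_nonpos fun i _ => hterm i, ← qf_eq_sum hM]
      exact h
    have hczero : star U *ᵥ u = 0 := by
      funext i
      by_cases hPi : P i
      · have h0 := hall i (Finset.mem_univ i)
        have hlam : lam i ≠ 0 := ne_of_lt (hP i hPi)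
        have hsq : ((star U *ᵥ u) i) ^ 2 = 0 := by
          rcases mul_eq_zero.mp h0 with h' | h'
          · exact absurd h' hlam
          · exact h'
        exact sq_eq_zero_iff.mp hsq
      · exact hcoords i hPi
    apply hne
    have h4 := congrArg (fun v => U *ᵥ v) hczero
    simpa [mulVec_star_mulVec hU] using h4

lemma qf_nonneg_on_colSpan (hU' : star U * U = 1)
    (hM : M = U * Matrix.diagonal lam * star U)
    (P : Fin n → Prop) (hP : ∀ i, P i → 0 ≤ lam i) :
    ∀ u ∈ colSpan U P, 0 ≤ qf M u := by
  intro u hu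
  have hcoords := coords_colSpan hU' P hu
  rw [qf_eq_sum hM]
  apply Finset.sum_nonneg
  intro i _
  by_cases hPi : P i
  · exact mul_nonneg (hP i hPi) (sq_nonneg _)
  · rw [hcoords i hPi]; simp

lemma negIdx_eq_card (hU : U * star U = 1) (hU' : star U * U = 1)
    (hM : M = U * Matrix.diagonal lam * star U) :
    negIdx M = Fintype.card {i // lam i < 0} := by
  classical
  apply le_antisymm
  · -- upper bound
    apply csSup_le (negSet_nonempty M)
    rintro k ⟨W, hWrank, hWneg⟩
    set P' : Fin n → Prop := fun i => ¬ (lam i < 0) with hP'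
    have hnonneg := qf_nonneg_on_colSpan hU' hM P' (fun i hi => le_of_not_gt hi)
    have hdisj : W ⊓ colSpan U P' = ⊥ := by
      rw [Submodule.eq_bot_iff]
      intro u hu
      by_contra hne
      exact absurd (hnonneg u hu.2) (not_le.mpr (hWneg u hu.1 hne))
    have hsum := Submodule.finrank_sup_add_finrank_inf_eq W (colSpan U P')
    rw [hdisj] at hsum
    have hle : finrank ℝ ↥(W ⊔ colSpan U P') ≤ n := by
      have := Submodule.finrank_le (W ⊔ colSpan U P')
      simpa [Module.finrank_pi] using this
    have hcs : finrank ℝ (colSpan U P') = Fintype.card {i // P' i} :=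
      finrank_colSpan hU' P'
    have hcompl : Fintype.card {i // P' i} = n - Fintype.card {i // lam i < 0} := by
      have := Fintype.card_subtype_compl (fun i : Fin n => lam i < 0)
      simpa [hP', Fintype.card_fin] using this
    have hcard_le : Fintype.card {i // lam i < 0} ≤ n := by
      have := Fintype.card_subtype_le (fun i : Fin n => lam i < 0)
      simpa using this
    simp only [finrank_bot, add_zero] at hsum
    omega
  · -- lower bound
    apply le_negIdx
    exact ⟨colSpan U (fun i => lam i < 0),
      finrank_colSpan hU' _,
      qf_neg_on_colSpan hU hU' hM _ (fun _ hi => hi)⟩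

end Core

lemma isHermitian_of_isSymm {M : Matrix (Fin n) (Fin n) ℝ} (h : M.IsSymm) : M.IsHermitian := by
  have : Mᴴ = Mᵀ := by
    ext i j
    simp [Matrix.conjTranspose_apply]
  rw [Matrix.IsHermitian, this]
  exact h

lemma eigen_decomp {M : Matrix (Fin n) (Fin n) ℝ} (hM : M.IsHermitian) :
    ∃ (U : Matrix (Fin n) (Fin n) ℝ) (lam : Fin n → ℝ),
      U * star U = 1 ∧ star U * U = 1 ∧ M = U * Matrix.diagonal lam * star U ∧
      Matrix.det M = ∏ i, lam i := by
  refine ⟨(hM.eigenvectorUnitary : Matrix (Fin n) (Fin n) ℝ), hM.eigenvalues, ?_, ?_, ?_, ?_⟩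
  · exact Matrix.mem_unitaryGroup_iff.mp hM.eigenvectorUnitary.2
  · exact Matrix.mem_unitaryGroup_iff'.mp hM.eigenvectorUnitary.2
  · have := hM.spectral_theorem
    simpa [RCLike.ofReal_real_eq_id, Function.comp] using this
  · simpa using hM.det_eq_prod_eigenvalues

lemma negIdx_add_negIdx_neg {M : Matrix (Fin n) (Fin n) ℝ} (hM : M.IsHermitian)
    (hdet : Matrix.det M ≠ 0) : negIdx M + negIdx (-M) = n := by
  classical
  obtain ⟨U, lam, hU, hU', hdec, hdetprod⟩ := eigen_decomp hM
  have hdecneg : -M = U * Matrix.diagonal (-lam) * star U := by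
    have hdiagneg : Matrix.diagonal (-lam) = -Matrix.diagonal lam := by
      ext i j
      by_cases h : i = j <;> simp [h]
    rw [hdec, hdiagneg, Matrix.mul_neg, Matrix.neg_mul]
  have h1 := negIdx_eq_card hU hU' hdec
  have h2 := negIdx_eq_card hU hU' hdecneg
  have hne : ∀ i, lam i ≠ 0 := by
    intro i hi
    apply hdet
    rw [hdetprod]
    exact Finset.prod_eq_zero (Finset.mem_univ i) hi
  rw [h1, h2]
  have hequiv : Fintype.card {i // (-lam) i < 0} = Fintype.card {i // ¬ (lam i < 0)} := by
    apply Fintype.card_congr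
    apply Equiv.subtypeEquivRight
    intro i
    constructor
    · intro h hl
      have hpos : 0 < lam i := by simpa using h
      exact absurd hl (asymm hpos)
    · intro h
      have : 0 < lam i := lt_of_le_of_ne (le_of_not_gt h) (Ne.symm (hne i))
      simpa using this
  rw [hequiv, Fintype.card_subtype_compl, Fintype.card_fin]
  have hcard_le : Fintype.card {i // lam i < 0} ≤ n := by
    have := Fintype.card_subtype_le (fun i : Fin n => lam i < 0)
    simpa using this
  omega

lemma sign_det {M : Matrix (Fin n) (Fin n) ℝ} (hM : M.IsHermitian)
    (hdet : Matrix.det M ≠ 0) : 0 < (-1 : ℝ) ^ (negIdx M) * Matrix.det M := by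
  classical
  obtain ⟨U, lam, hU, hU', hdec, hdetprod⟩ := eigen_decomp hM
  have h1 := negIdx_eq_card hU hU' hdec
  have hne : ∀ i, lam i ≠ 0 := by
    intro i hi
    apply hdet
    rw [hdetprod]
    exact Finset.prod_eq_zero (Finset.mem_univ i) hi
  set s : Finset (Fin n) := Finset.univ.filter (fun i => lam i < 0) with hs
  have hqs : negIdx M = s.card := by
    rw [h1, Fintype.card_subtype]
  rw [hqs, hdetprod, ← Finset.prod_filter_mul_prod_filter_not Finset.univ (fun i => lam i < 0)]
  have key : (-1 : ℝ) ^ s.card * (∏ i ∈ s, lam i) = ∏ i ∈ s, (-(lam i)) := by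
    rw [Finset.prod_congr rfl (fun i _ => (neg_eq_neg_one_mul (lam i))),
      Finset.prod_mul_distrib, Finset.prod_const]
  rw [← hs, ← mul_assoc, key]
  apply mul_pos
  · apply Finset.prod_pos
    intro i hi
    rw [hs, Finset.mem_filter] at hi
    linarith [hi.2]
  · apply Finset.prod_pos
    intro i hi
    rw [Finset.mem_filter] at hi
    exact lt_of_le_of_ne (le_of_not_gt hi.2) (Ne.symm (hne i))

lemma stability {M : Matrix (Fin n) (Fin n) ℝ} {W : Submodule ℝ (Fin n → ℝ)}
    (hW : ∀ u ∈ W, u ≠ 0 → qf M u < 0) :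
    ∃ V : Set (Matrix (Fin n) (Fin n) ℝ), IsOpen V ∧ M ∈ V ∧
      ∀ M' ∈ V, ∀ u ∈ W, u ≠ 0 → qf M' u < 0 := by
  classical
  set K : Set (Fin n → ℝ) := (W : Set (Fin n → ℝ)) ∩ Metric.sphere 0 1 with hK
  have hKcompact : IsCompact K := by
    have hclosed : IsClosed K :=
      (Submodule.closed_of_finiteDimensional W).inter Metric.isClosed_sphere
    have hbdd : Bornology.IsBounded K :=
      (Metric.isBounded_sphere).subset Set.inter_subset_right
    exact Metric.isCompact_of_isClosed_isBounded hclosed hbdd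
  set O : Set (Matrix (Fin n) (Fin n) ℝ × (Fin n → ℝ)) := {p | qf p.1 p.2 < 0} with hO
  have hOopen : IsOpen O := isOpen_lt continuous_qf continuous_const
  have hsub : Set.singleton M ×ˢ K ⊆ O := by
    rintro ⟨M', u⟩ ⟨hM', hu⟩
    rcases hu with ⟨huW, huS⟩
    have hnorm : ‖u‖ = 1 := mem_sphere_zero_iff_norm.mp huS
    have hne : u ≠ 0 := by
      intro h
      rw [h] at hnorm
      simp at hnorm
    have : M' = M := hM'
    rw [hO, Set.mem_setOf_eq, this]
    exact hW u huW hne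
  obtain ⟨V, V', hVopen, hV'open, hMV, hKV', hVV'⟩ :=
    generalized_tube_lemma isCompact_singleton hKcompact hOopen hsub
  refine ⟨V, hVopen, hMV rfl, ?_⟩
  intro M' hM' u huW hune
  set u' : Fin n → ℝ := ‖u‖⁻¹ • u with hu'
  have hu'W : u' ∈ W := W.smul_mem _ huW
  have hu'norm : ‖u'‖ = 1 := norm_smul_inv_norm hune
  have hu'K : u' ∈ K := ⟨hu'W, by simpa using hu'norm⟩
  have : (M', u') ∈ O := hVV' ⟨hM', hKV' hu'K⟩
  have hqu' : qf M' u' < 0 := this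
  have hurec : u = ‖u‖ • u' := by
    rw [hu', smul_smul, mul_inv_cancel₀ (norm_ne_zero_iff.mpr hune), one_smul]
  calc qf M' u = ‖u‖ ^ 2 * qf M' u' := by nth_rewrite 1 [hurec]; rw [qf_smul]
  _ < 0 := mul_neg_of_pos_of_neg (pow_pos (norm_pos_iff.mpr hune) 2) hqu'

section Path

variable {A B : Matrix (Fin n) (Fin n) ℝ}

/-- The pencil path. -/
noncomputable def pencilPath (A B : Matrix (Fin n) (Fin n) ℝ) (t : ℝ) :
    Matrix (Fin n) (Fin n) ℝ :=
  Real.cos t • A - Real.sin t • B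

lemma pencilPath_isHermitian (hA : A.IsSymm) (hB : B.IsSymm) (t : ℝ) :
    (pencilPath A B t).IsHermitian := by
  apply isHermitian_of_isSymm
  show (pencilPath A B t)ᵀ = pencilPath A B t
  rw [pencilPath, Matrix.transpose_sub, Matrix.transpose_smul,
    Matrix.transpose_smul, hA.eq, hB.eq]

lemma continuous_pencilPath : Continuous (pencilPath A B) :=
  (Real.continuous_cos.smul continuous_const).sub (Real.continuous_sin.smul continuous_const)

lemma pencilPath_neg (t : ℝ) : -(pencilPath A B t) = pencilPath A B (t + Real.pi) := by
  rw [pencilPath, pencilPath, Real.cos_add_pi, Real.sin_add_pi]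
  simp [neg_smul]
  abel

lemma negIdx_constant (hA : A.IsSymm) (hB : B.IsSymm)
    (hdet : ∀ t : ℝ, Matrix.det (pencilPath A B t) ≠ 0) :
    ∀ t : ℝ, negIdx (pencilPath A B t) = negIdx A := by
  classical
  set g : ℝ → ℕ := fun t => negIdx (pencilPath A B t) with hg
  have hloc : ∀ t₀ : ℝ, ∃ T : Set ℝ, IsOpen T ∧ t₀ ∈ T ∧ ∀ t ∈ T, g t = g t₀ := by
    intro t₀
    obtain ⟨W₁, hW₁rank, hW₁neg⟩ := negIdx_mem (pencilPath A B t₀)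
    obtain ⟨W₂, hW₂rank, hW₂neg⟩ := negIdx_mem (-(pencilPath A B t₀))
    obtain ⟨V₁, hV₁open, hMV₁, hV₁⟩ := stability hW₁neg
    obtain ⟨V₂, hV₂open, hMV₂, hV₂⟩ := stability hW₂neg
    refine ⟨(pencilPath A B) ⁻¹' V₁ ∩ (fun t => -(pencilPath A B t)) ⁻¹' V₂,
      (hV₁open.preimage continuous_pencilPath).inter
        (hV₂open.preimage continuous_pencilPath.neg), ⟨hMV₁, hMV₂⟩, ?_⟩
    intro t ht
    have hq : negIdx (pencilPath A B t₀) ≤ negIdx (pencilPath A B t) :=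
      le_negIdx ⟨W₁, hW₁rank, hV₁ _ ht.1⟩
    have hp : negIdx (-(pencilPath A B t₀)) ≤ negIdx (-(pencilPath A B t)) :=
      le_negIdx ⟨W₂, hW₂rank, hV₂ _ ht.2⟩
    have hsum : negIdx (pencilPath A B t) + negIdx (-(pencilPath A B t)) = n :=
      negIdx_add_negIdx_neg (pencilPath_isHermitian hA hB t) (hdet t)
    have hsum₀ : negIdx (pencilPath A B t₀) + negIdx (-(pencilPath A B t₀)) = n :=
      negIdx_add_negIdx_neg (pencilPath_isHermitian hA hB t₀) (hdet t₀)
    simp only [hg]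
    omega
  -- locally constant implies constant
  have hconst : ∀ t : ℝ, g t = g 0 := by
    intro t
    set S : Set ℝ := {t | g t = g 0} with hS
    have hSopen : IsOpen S := by
      rw [isOpen_iff_forall_mem_open]
      intro t₀ ht₀
      obtain ⟨T, hTopen, htT, hTconst⟩ := hloc t₀
      exact ⟨T, fun t' ht' => (hTconst t' ht').trans ht₀, hTopen, htT⟩
    have hScopen : IsOpen Sᶜ := by
      rw [isOpen_iff_forall_mem_open]
      intro t₀ ht₀
      obtain ⟨T, hTopen, htT, hTconst⟩ := hloc t₀
      refine ⟨T, fun t' ht' h => ht₀ ?_, hTopen, htT⟩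
      rw [hS, Set.mem_setOf_eq, ← hTconst t' ht']
      exact h
    have hclopen : IsClopen S := ⟨isOpen_compl_iff.mp hScopen, hSopen⟩
    rcases isClopen_iff.mp hclopen with h | h
    · exfalso
      have : (0 : ℝ) ∈ S := Set.mem_setOf_eq ▸ rfl
      rw [h] at this
      exact this
    · have : t ∈ S := by rw [h]; trivial
      exact this
  intro t
  have h0 : g 0 = negIdx A := by
    simp [hg, pencilPath]
  rw [← h0]
  exact hconst t

lemma negIdx_A_eq_half (hA : A.IsSymm) (hB : B.IsSymm)
    (hdet : ∀ t : ℝ, Matrix.det (pencilPath A B t) ≠ 0) :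
    2 * negIdx A = n := by
  have hconst := negIdx_constant hA hB hdet
  have hpi := hconst Real.pi
  have hnegA : pencilPath A B Real.pi = -A := by
    simp [pencilPath]
  rw [hnegA] at hpi
  have hsum : negIdx A + negIdx (-A) = n := by
    have h0 : pencilPath A B 0 = A := by simp [pencilPath]
    have := negIdx_add_negIdx_neg (pencilPath_isHermitian hA hB 0) (hdet 0)
    rw [h0] at this
    exact this
  omega

end Path

end Stmt6Aux

open Stmt6Aux Module in
theorem stmt6 (n : ℕ) (hneven : Even n) (f : Fin (n+1) → ℝ)
    (hsep : (fxOne f).Separable) (hdeg : (fxOne f).natDegree = n)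
    (hnegdef : ∀ x y : ℝ, (x, y) ≠ (0, 0) → evalBinForm f x y < 0) :
    ¬ ∃ A B : Matrix (Fin n) (Fin n) ℝ, A.IsSymm ∧ B.IsSymm ∧ pencilDisc A B = binForm f := by
  rintro ⟨A, B, hAs, hBs, heq⟩
  -- Step 1: evaluation of the identity at a point (x, y)
  have heval : ∀ x y : ℝ,
      (-1 : ℝ) ^ (n * (n - 1) / 2) * Matrix.det (x • A - y • B) = evalBinForm f x y := by
    intro x y
    have := congrArg (MvPolynomial.eval (![x, y] : Fin 2 → ℝ)) heq
    rw [pencilDisc, binForm] at this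
    rw [_root_.map_mul, map_pow] at this
    rw [(MvPolynomial.eval (![x, y] : Fin 2 → ℝ)).map_det, RingHom.mapMatrix_apply] at this
    have hmat : (Matrix.of fun i j =>
        MvPolynomial.X (0 : Fin 2) * MvPolynomial.C (A i j) -
          MvPolynomial.X (1 : Fin 2) * MvPolynomial.C (B i j)).map
          (MvPolynomial.eval (![x, y] : Fin 2 → ℝ)) = x • A - y • B := by
      ext i j
      simp [Matrix.map_apply]
    rw [hmat] at this
    simp only [_root_.map_neg, _root_.map_one, Fintype.card_fin] at this
    rw [this]
    rw [evalBinForm]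
    rw [map_sum]
    apply Finset.sum_congr rfl
    intro i _
    simp
  -- Step 2: the pencil is nonsingular everywhere off the origin
  have hdetxy : ∀ x y : ℝ, (x, y) ≠ (0, 0) → Matrix.det (x • A - y • B) ≠ 0 := by
    intro x y hxy hdet0
    have hth := heval x y
    rw [hdet0, mul_zero] at hth
    have hlt := hnegdef x y hxy
    rw [← hth] at hlt
    exact lt_irrefl _ hlt
  have hdetpath : ∀ t : ℝ, Matrix.det (pencilPath A B t) ≠ 0 := by
    intro t
    apply hdetxy
    intro h
    have h1 : Real.cos t = 0 := congrArg Prod.fst h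
    have h2 : Real.sin t = 0 := congrArg Prod.snd h
    have := Real.sin_sq_add_cos_sq t
    rw [h1, h2] at this
    norm_num at this
  -- Step 3: negIdx A = n / 2
  have hhalf : 2 * negIdx A = n := negIdx_A_eq_half hAs hBs hdetpath
  -- Step 4: det A ≠ 0 and sign
  have hdetA : Matrix.det A ≠ 0 := by
    have := hdetxy 1 0 (by simp)
    simpa using this
  have hsign : 0 < (-1 : ℝ) ^ (negIdx A) * Matrix.det A :=
    sign_det (isHermitian_of_isSymm hAs) hdetA
  -- Step 5: f 0 < 0 and the evaluation at (1,0)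
  have hf0 : evalBinForm f 1 0 = f 0 := by
    rw [evalBinForm]
    rw [Finset.sum_eq_single (0 : Fin (n+1))]
    · simp
    · intro i _ hi
      have : (i : ℕ) ≠ 0 := fun h => hi (Fin.ext h)
      simp [zero_pow this]
    · simp
  have hfneg : f 0 < 0 := by
    rw [← hf0]
    exact hnegdef 1 0 (by simp)
  have heval10 : (-1 : ℝ) ^ (n * (n - 1) / 2) * Matrix.det A = f 0 := by
    have := heval 1 0
    rw [hf0] at this
    simpa using this
  -- Step 6: parity computation
  have hpowgen : ∀ m q : ℕ, m = 2 * q → (-1 : ℝ) ^ (m * (m - 1) / 2) = (-1 : ℝ) ^ q := by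
    intro m q hm
    have hexp : m * (m - 1) / 2 = q * (m - 1) := by
      have h2 : m * (m - 1) = 2 * (q * (m - 1)) := by
        rw [hm]
        ring
      rw [h2, Nat.mul_div_cancel_left _ (by norm_num : 0 < 2)]
    rw [hexp, pow_mul]
    rcases Nat.even_or_odd q with hqe | hqo
    · rw [hqe.neg_one_pow, one_pow]
    · have hq1 : 1 ≤ q := hqo.pos
      have hodd : Odd (m - 1) := ⟨q - 1, by omega⟩
      rw [hqo.neg_one_pow, hodd.neg_one_pow]
  have hpow : (-1 : ℝ) ^ (n * (n - 1) / 2) = (-1 : ℝ) ^ (negIdx A) :=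
    hpowgen n (negIdx A) hhalf.symm
  rw [hpow] at heval10
  rw [heval10] at hsign
  exact absurd hsign (not_lt.mpr (le_of_lt hfneg))
end

section
/- Let n be a positive integer, let A and B be n×n symmetric matrices over a commutative ring, and define the (n+2)×(n+2) symmetric matrices A′ and B′ as block-diagonal sums: A′ is A together with the 2×2 block [[1,0],[0,0]], and B′ is B together with the 2×2 block [[0,1],[1,0]]. Then (−1)^{(n+2)(n+1)/2}·det(xA′ − yB′) = y²·(−1)^{n(n−1)/2}·det(xA − yB) as binary forms in x and y; that is, disc(xA′ − yB′) = f(x,y)·y² where f(x,y) = disc(xA − yB). -/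
open Polynomial Matrix

/-
The pencil of an orthogonal sum is the block-diagonal sum of the pencils, so its determinant is
the product of the two determinants. The sign exponents are triangular numbers, and
`T(a + b) = T(a) + T(b) + a b`; for a block of size 2 the cross term `2a` is even, so `disc` is
multiplicative for such sums. Finally the hyperbolic plane pencil `x·[[1,0],[0,0]] − y·[[0,1],[1,0]]`
has determinant `−y²` and sign `−1`, hence discriminant `y²`.
-/

theorem Nat.add_mul_add_sub_one_div_two (a b : ℕ) :
    (a + b) * (a + b - 1) / 2 = a * (a - 1) / 2 + b * (b - 1) / 2 + a * b := by
  induction b with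
  | zero => simp
  | succ b ih =>
    rw [← add_assoc, Nat.triangle_succ, Nat.triangle_succ, ih]
    ring

namespace Matrix

variable {m p R : Type*} [Fintype m] [Fintype p] [DecidableEq m] [DecidableEq p] [CommRing R]

noncomputable def pencil {ι : Type*} (A B : Matrix ι ι R) : Matrix ι ι (MvPolynomial (Fin 2) R) :=
  of fun i j => MvPolynomial.X 0 * MvPolynomial.C (A i j) - MvPolynomial.X 1 * MvPolynomial.C (B i j)

theorem pencilDisc_eq (A B : Matrix m m R) :
    pencilDisc A B = (-1) ^ (Fintype.card m * (Fintype.card m - 1) / 2) * (pencil A B).det :=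
  rfl

theorem pencil_fromBlocks_zero {ι κ : Type*} (A B : Matrix ι ι R) (D E : Matrix κ κ R) :
    pencil (fromBlocks A 0 0 D) (fromBlocks B 0 0 E) = fromBlocks (pencil A B) 0 0 (pencil D E) := by
  ext (i | i) (j | j) <;> simp [pencil]

theorem pencilDisc_fromBlocks_zero (A B : Matrix m m R) (D E : Matrix p p R) :
    pencilDisc (fromBlocks A 0 0 D) (fromBlocks B 0 0 E) =
      (-1) ^ (Fintype.card m * Fintype.card p) * pencilDisc A B * pencilDisc D E := by
  rw [pencilDisc_eq, pencilDisc_eq, pencilDisc_eq, pencil_fromBlocks_zero, det_fromBlocks_zero₂₁,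
    Fintype.card_sum, Nat.add_mul_add_sub_one_div_two, pow_add, pow_add]
  ring

theorem pencilDisc_fromBlocks_zero_fin_two (A B : Matrix m m R) (D E : Matrix (Fin 2) (Fin 2) R) :
    pencilDisc (fromBlocks A 0 0 D) (fromBlocks B 0 0 E) = pencilDisc A B * pencilDisc D E := by
  rw [pencilDisc_fromBlocks_zero, Fintype.card_fin, (even_two.mul_left _).neg_one_pow, one_mul]

theorem pencilDisc_hyperbolic :
    pencilDisc (!![1, 0; 0, 0] : Matrix (Fin 2) (Fin 2) R) !![0, 1; 1, 0] =
      MvPolynomial.X 1 ^ 2 := by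
  rw [pencilDisc_eq, det_fin_two]
  simp [pencil, sq]

end Matrix

theorem stmt9_general (n : ℕ) (R : Type*) [CommRing R]
    (A B : Matrix (Fin n) (Fin n) R) :
    pencilDisc
        (Matrix.fromBlocks A 0 0 (!![1, 0; 0, 0] : Matrix (Fin 2) (Fin 2) R))
        (Matrix.fromBlocks B 0 0 (!![0, 1; 1, 0] : Matrix (Fin 2) (Fin 2) R)) =
      MvPolynomial.X (1 : Fin 2) ^ 2 * pencilDisc A B := by
  rw [Matrix.pencilDisc_fromBlocks_zero_fin_two, Matrix.pencilDisc_hyperbolic, mul_comm]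

theorem stmt9 (n : ℕ) (hn : 0 < n) (R : Type*) [CommRing R]
    (A B : Matrix (Fin n) (Fin n) R) (hA : A.IsSymm) (hB : B.IsSymm) :
    pencilDisc
        (Matrix.fromBlocks A 0 0 (!![1, 0; 0, 0] : Matrix (Fin 2) (Fin 2) R))
        (Matrix.fromBlocks B 0 0 (!![0, 1; 1, 0] : Matrix (Fin 2) (Fin 2) R)) =
      MvPolynomial.X (1 : Fin 2) ^ 2 * pencilDisc A B :=
  stmt9_general n R A B
end

section
/- Let p be a prime and let f(x,y) = f₀xⁿ + ⋯ + f_nyⁿ be a binary form of degree n over ℚ_p with f₀ ≠ 0, with f(x,1) separable of degree n, and such that f_i/f₀ ∈ 2^{4i}·ℤ_p for i = 1, …, n. Write f(x,1) = f₀g(x) with g monic, let L = ℚ_p[x]/(g(x)) and let θ be the image of x in L. Then for every a ∈ ℚ_p with a ∉ ℤ_p, the element a − θ is invertible in L and lies in L^{×2}·ℚ_p^×; that is, there exist u ∈ L^× and t ∈ ℚ_p^× with a − θ = t·u². -/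
/-!
Since `a ∉ ℤ_p`, `c = a⁻¹` lies in the maximal ideal of `ℤ_p` and `a - θ = a (1 - cθ)`.
The divisibility of the coefficients makes `θ / 4` integral over `ℤ_p`, so that
`1 - cθ = 1 + 4 (-c) (θ / 4)` lies in `ℤ_p[θ / 4]`, a finite `ℤ_p`-algebra, hence complete and
Henselian for the extension of the maximal ideal. There `1 + 4d = (1 + 2t)²` where `t` is the
Hensel root of `t² + t = d`: this polynomial has derivative `1` at `0`, which is why the argument
also works for `p = 2`.
-/

open Polynomial

theorem IsAdicComplete.of_finite {R : Type*} [CommRing R] [IsNoetherianRing R] (I : Ideal R)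
    [IsAdicComplete I R] (M : Type*) [AddCommGroup M] [Module R M] [Module.Finite R M] :
    IsAdicComplete I M where
  toIsHausdorff := .of_le_jacobson I M (IsAdicComplete.le_jacobson_bot I)
  toIsPrecomplete := by
    rw [← AdicCompletion.of_surjective_iff]
    intro y
    obtain ⟨t, rfl⟩ := AdicCompletion.ofTensorProduct_surjective_of_finite I M y
    induction t using TensorProduct.induction_on with
    | zero => exact ⟨0, by simp⟩
    | tmul r x =>
      obtain ⟨r, rfl⟩ := AdicCompletion.of_surjective I R r
      refine ⟨r • x, ?_⟩
      rw [AdicCompletion.ofTensorProduct_tmul, map_smul, ← Algebra.algebraMap_self_apply r,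
        ← AdicCompletion.algebraMap_apply]
      exact (algebraMap_smul (AdicCompletion I R) r _).symm
    | add s t hs ht =>
      obtain ⟨x, hx⟩ := hs
      obtain ⟨y, hy⟩ := ht
      exact ⟨x + y, by simp [hx, hy]⟩

theorem IsAdicComplete.map_algebraMap_of_finite {R : Type*} [CommRing R] [IsNoetherianRing R]
    (I : Ideal R) [IsAdicComplete I R] (S : Type*) [CommRing S] [Algebra R S]
    [Module.Finite R S] : IsAdicComplete (I.map (algebraMap R S)) S :=
  have := IsAdicComplete.of_finite I S
  { toIsHausdorff := IsHausdorff.map_algebraMap_iff.mpr inferInstance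
    toIsPrecomplete := IsPrecomplete.map_algebraMap_iff.mpr inferInstance }

theorem HenselianRing.exists_isUnit_sq_eq_one_add_four_mul {S : Type*} [CommRing S] {J : Ideal S}
    [HenselianRing S J] {d : S} (hd : d ∈ J) : ∃ s : S, IsUnit s ∧ s ^ 2 = 1 + 4 * d := by
  have hmonic : (X ^ 2 + X - C d).Monic := by monicity!
  obtain ⟨t, ht, htJ⟩ :=
    HenselianRing.is_henselian (X ^ 2 + X - C d) hmonic 0 (by simpa using hd) (by simp)
  refine ⟨1 + 2 * t, ?_, ?_⟩
  · have h2t : 2 * t ∈ J := J.mul_mem_left 2 (by simpa using htJ)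
    simpa [add_comm] using Ideal.mem_jacobson_bot.mp (HenselianRing.jac h2t) 1
  · simp only [IsRoot, eval_sub, eval_add, eval_pow, eval_X, eval_C] at ht
    linear_combination 4 * ht

theorem IsIntegral.exists_isUnit_sq_eq_one_add_four_mul {R A : Type*} [CommRing R]
    [IsNoetherianRing R] {I : Ideal R} [IsAdicComplete I R] [CommRing A] [Algebra R A] {x : A}
    (hx : IsIntegral R x) {c : R} (hc : c ∈ I) :
    ∃ u : A, IsUnit u ∧ u ^ 2 = 1 + 4 * (algebraMap R A c * x) := by
  let S := Algebra.adjoin R {x}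
  have : Module.Finite R S := Algebra.finite_adjoin_simple_of_isIntegral hx
  have := IsAdicComplete.map_algebraMap_of_finite I S
  obtain ⟨s, hs, hs2⟩ := HenselianRing.exists_isUnit_sq_eq_one_add_four_mul
    (d := algebraMap R S c * ⟨x, Algebra.self_mem_adjoin_singleton R x⟩)
    (Ideal.mul_mem_right _ _ (Ideal.mem_map_of_mem _ hc))
  exact ⟨s, hs.map S.val, by
    simpa only [map_pow, map_add, map_one, map_mul, map_ofNat, AlgHom.commutes,
      Subalgebra.coe_val] using congrArg S.val hs2⟩

section fxOne

variable {n : ℕ} {R A : Type*} [CommRing R] [CommRing A] [Algebra R A]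

theorem fxOne_monic {c : Fin (n+1) → R} (hc : c 0 = 1) : (fxOne c).Monic := by
  nontriviality R
  rw [fxOne, Fin.sum_univ_succ]
  simp only [Fin.val_zero, Nat.sub_zero, hc, map_one, one_mul]
  refine (monic_X_pow n).add_of_left ((degree_sum_le _ _).trans_lt ?_)
  rw [degree_X_pow]
  refine (Finset.sup_lt_iff (WithBot.bot_lt_coe n)).mpr fun i _ => ?_
  refine (degree_C_mul_X_pow_le _ _).trans_lt ?_
  rw [Nat.cast_withBot]
  exact WithBot.coe_lt_coe.mpr (by simp only [Fin.val_succ]; omega)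

theorem C_mul_fxOne (r : R) (c : Fin (n+1) → R) :
    C r * fxOne c = fxOne fun i => r * c i := by
  simp only [fxOne, Finset.mul_sum, map_mul, mul_assoc]

theorem fxOne_map {S : Type*} [CommRing S] (φ : R →+* S) (c : Fin (n+1) → R) :
    (fxOne c).map φ = fxOne fun i => φ (c i) := by
  simp [fxOne, Polynomial.map_sum]

theorem aeval_fxOne (c : Fin (n+1) → R) (y : A) :
    aeval y (fxOne c) = ∑ i : Fin (n+1), algebraMap R A (c i) * y ^ (n - (i:ℕ)) := by
  simp [fxOne]

theorem aeval_mul_fxOne (c : Fin (n+1) → R) (r : R) (y : A) :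
    aeval (algebraMap R A r * y) (fxOne fun i => r ^ (i:ℕ) * c i) =
      algebraMap R A r ^ n * aeval y (fxOne c) := by
  simp only [aeval_fxOne, Finset.mul_sum, map_mul, map_pow]
  refine Finset.sum_congr rfl fun i _ => ?_
  rw [← pow_sub_mul_pow _ (Nat.lt_succ_iff.mp i.isLt)]
  ring

theorem isIntegral_of_aeval_mul_fxOne_eq_zero {c : Fin (n+1) → R} (hc : c 0 = 1) {r : R}
    (hr : IsUnit (algebraMap R A r)) {y : A}
    (hy : aeval (algebraMap R A r * y) (fxOne fun i => r ^ (i:ℕ) * c i) = 0) :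
    IsIntegral R y := by
  rw [aeval_mul_fxOne] at hy
  exact ⟨fxOne c, fxOne_monic hc, by rwa [← aeval_def, ← (hr.pow n).mul_right_eq_zero]⟩

end fxOne

theorem isIntegral_inv_mul_root_of_eq_map_fxOne {n : ℕ} {R K : Type*} [CommRing R] [Field K]
    [Algebra R K] {z : Fin (n+1) → R} (hz0 : z 0 = 1) {r : R} (hr : algebraMap R K r ≠ 0)
    {g : K[X]} (hg : g = (fxOne fun i => r ^ (i:ℕ) * z i).map (algebraMap R K)) :
    IsIntegral R (algebraMap K (AdjoinRoot g) (algebraMap R K r)⁻¹ * AdjoinRoot.root g) := by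
  let e := algebraMap K (AdjoinRoot g)
  have hr' : algebraMap R (AdjoinRoot g) r = e (algebraMap R K r) :=
    IsScalarTower.algebraMap_apply R K _ r
  refine isIntegral_of_aeval_mul_fxOne_eq_zero hz0
    (by rw [hr']; exact (isUnit_iff_ne_zero.mpr hr).map e) ?_
  rw [hr', ← mul_assoc, ← map_mul, mul_inv_cancel₀ hr, map_one, one_mul,
    ← aeval_map_algebraMap K, ← hg, AdjoinRoot.aeval_eq, AdjoinRoot.mk_self]

namespace PadicInt

variable {p : ℕ} [Fact p.Prime]

theorem exists_C_inv_mul_fxOne_eq_map {n : ℕ} {f : Fin (n+1) → ℚ_[p]} (hf0 : f 0 ≠ 0)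
    (hcoef : ∀ i : Fin (n+1), 1 ≤ (i : ℕ) →
      ∃ z : ℤ_[p], f i / f 0 = (2 : ℚ_[p]) ^ (4 * (i : ℕ)) * (z : ℚ_[p])) :
    ∃ z : Fin (n+1) → ℤ_[p], z 0 = 1 ∧
      C (f 0)⁻¹ * fxOne f = (fxOne fun i => 4 ^ (i:ℕ) * z i).map (algebraMap ℤ_[p] ℚ_[p]) := by
  choose w hw using hcoef
  refine ⟨fun i => if h : (i:ℕ) = 0 then 1 else 4 ^ (i:ℕ) * w i (Nat.one_le_iff_ne_zero.mpr h),
    by simp, ?_⟩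
  rw [fxOne_map, C_mul_fxOne]
  congr 1
  funext i
  rw [map_mul, map_pow, map_ofNat, algebraMap_apply, inv_mul_eq_div]
  dsimp only
  split_ifs with h
  · obtain rfl : i = 0 := Fin.ext h
    simp [hf0]
  · rw [hw, coe_mul, coe_pow, show ((4 : ℤ_[p]) : ℚ_[p]) = 4 by norm_cast,
      show (2 : ℚ_[p]) ^ (4 * (i:ℕ)) = 4 ^ (i:ℕ) * 4 ^ (i:ℕ) by rw [← mul_pow, pow_mul]; norm_num,
      mul_assoc]

theorem exists_mem_maximalIdeal_coe_eq_inv {a : ℚ_[p]} (ha : ¬ ∃ z : ℤ_[p], (z : ℚ_[p]) = a) :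
    ∃ c ∈ IsLocalRing.maximalIdeal ℤ_[p], (c : ℚ_[p]) = a⁻¹ := by
  have ha1 : 1 < ‖a‖ := by
    by_contra! h
    exact ha ⟨⟨a, h⟩, rfl⟩
  have hlt : ‖a⁻¹‖ < 1 := by
    rw [norm_inv]
    exact inv_lt_one_of_one_lt₀ ha1
  exact ⟨⟨a⁻¹, hlt.le⟩, mem_nonunits.mpr hlt, rfl⟩

end PadicInt

theorem stmt15_general (p : ℕ) [Fact p.Prime] (n : ℕ) (f : Fin (n+1) → ℚ_[p]) (hf0 : f 0 ≠ 0)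
    (hcoef : ∀ i : Fin (n+1), 1 ≤ (i : ℕ) →
      ∃ z : ℤ_[p], f i / f 0 = (2 : ℚ_[p]) ^ (4 * (i : ℕ)) * (z : ℚ_[p])) :
    ∀ a : ℚ_[p], (¬ ∃ z : ℤ_[p], (z : ℚ_[p]) = a) →
      letI L := AdjoinRoot (C (f 0)⁻¹ * fxOne f)
      letI θ : L := AdjoinRoot.root (C (f 0)⁻¹ * fxOne f)
      IsUnit (algebraMap ℚ_[p] L a - θ) ∧
        ∃ (u : L) (t : ℚ_[p]), IsUnit u ∧ t ≠ 0 ∧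
          algebraMap ℚ_[p] L a - θ = algebraMap ℚ_[p] L t * u ^ 2 := by
  intro a ha
  have ha0 : a ≠ 0 := by
    rintro rfl
    exact ha ⟨0, PadicInt.coe_zero⟩
  obtain ⟨c, hc, hca⟩ := PadicInt.exists_mem_maximalIdeal_coe_eq_inv ha
  obtain ⟨z, hz0, hg⟩ := PadicInt.exists_C_inv_mul_fxOne_eq_map hf0 hcoef
  have hθ := isIntegral_inv_mul_root_of_eq_map_fxOne hz0 (r := 4) (by simp) hg
  obtain ⟨u, hu, hu2⟩ := hθ.exists_isUnit_sq_eq_one_add_four_mul (neg_mem hc)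
  set θ := AdjoinRoot.root (C (f 0)⁻¹ * fxOne f)
  let e := algebraMap ℚ_[p] (AdjoinRoot (C (f 0)⁻¹ * fxOne f))
  have key : e a - θ = e a * u ^ 2 := by
    rw [hu2, IsScalarTower.algebraMap_apply ℤ_[p] ℚ_[p], PadicInt.algebraMap_apply,
      PadicInt.coe_neg, hca, map_ofNat, ← map_ofNat e 4]
    calc e a - θ = e a - e (a * 4 * a⁻¹ * 4⁻¹) * θ := by
          rw [show a * 4 * a⁻¹ * 4⁻¹ = 1 by field_simp, map_one, one_mul]
      _ = _ := by simp only [map_mul, map_neg]; ring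
  have hea : IsUnit (e a) := (isUnit_iff_ne_zero.mpr ha0).map e
  exact ⟨key ▸ hea.mul (hu.pow 2), u, a, hu, ha0, key⟩

theorem stmt15 (p : ℕ) [Fact p.Prime] (n : ℕ) (f : Fin (n+1) → ℚ_[p]) (hf0 : f 0 ≠ 0)
    (hsep : (fxOne f).Separable) (hdeg : (fxOne f).natDegree = n)
    (hcoef : ∀ i : Fin (n+1), 1 ≤ (i : ℕ) →
      ∃ z : ℤ_[p], f i / f 0 = (2 : ℚ_[p]) ^ (4 * (i : ℕ)) * (z : ℚ_[p])) :
    ∀ a : ℚ_[p], (¬ ∃ z : ℤ_[p], (z : ℚ_[p]) = a) →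
      letI L := AdjoinRoot (C (f 0)⁻¹ * fxOne f)
      letI θ : L := AdjoinRoot.root (C (f 0)⁻¹ * fxOne f)
      IsUnit (algebraMap ℚ_[p] L a - θ) ∧
        ∃ (u : L) (t : ℚ_[p]), IsUnit u ∧ t ≠ 0 ∧
          algebraMap ℚ_[p] L a - θ = algebraMap ℚ_[p] L t * u ^ 2 :=
  stmt15_general p n f hf0 hcoef
end
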